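/- The hairclip Schwarz function S(z,t) = Log((e^t − e^z)/(1 + e^{t+z})) (principal complex logarithm) satisfies the curve-shortening Schwarz function equation: for every (z,t) ∈ ℂ × ℝ such that e^t − e^z ≠ 0, 1 + e^{t+z} ≠ 0, and the quotient (e^t − e^z)/(1 + e^{t+z}) does not lie in (−∞,0], one has S_z = −e^z(1 + e^{2t})/((e^t − e^z)(1 + e^{t+z})), S_t = e^t(1 + e^{2z})/((e^t − e^z)(1 + e^{t+z})), and S_t S_z = S_zz. -/

import Mathlib

/-!
Where the quotient `q = (e^t - e^z)/(1 + e^{t+z})` avoids the slit, `Log q` has logarithmic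
derivative `q'/q`, so `S_z` and `S_t` are rational in `a = e^t`, `u = e^z`:
`S_z = -u/(a - u) - au/(1 + au)` and `S_t = a/(a - u) - au/(1 + au)`. The equation
`S_zz = S_t S_z` is then an identity of rational functions in `a` and `u`.
-/

open Complex

theorem Complex.mem_slitPlane_of_forall_nonpos_ne {w : ℂ} (h : ∀ x : ℝ, x ≤ 0 → w ≠ x) :
    w ∈ slitPlane :=
  mem_slitPlane_iff_not_le_zero.2 fun hw ↦
    h w.re (nonpos_iff.1 hw).1 (ext rfl (by simpa using (nonpos_iff.1 hw).2))

theorem HasDerivAt.clog_div {f g : ℂ → ℂ} {f' g' x : ℂ} (hf : HasDerivAt f f' x)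
    (hg : HasDerivAt g g' x) (hg0 : g x ≠ 0) (h : f x / g x ∈ slitPlane) :
    HasDerivAt (fun w ↦ Complex.log (f w / g w)) (f' / f x - g' / g x) x := by
  have hf0 : f x ≠ 0 := left_ne_zero_of_mul (slitPlane_ne_zero h)
  refine ((hf.div hg hg0).clog h).congr_deriv ?_
  rw [Pi.div_apply]
  field_simp

section Hairclip

variable {c z : ℂ}

theorem hasDerivAt_hairclip_schwarz_z (hB : 1 + exp (c + z) ≠ 0)
    (hslit : (exp c - exp z) / (1 + exp (c + z)) ∈ slitPlane) :
    HasDerivAt (fun w ↦ log ((exp c - exp w) / (1 + exp (c + w))))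
      (-exp z * (1 + exp (2 * c)) / ((exp c - exp z) * (1 + exp (c + z)))) z := by
  have hA : exp c - exp z ≠ 0 := left_ne_zero_of_mul (slitPlane_ne_zero hslit)
  refine (((hasDerivAt_exp z).const_sub (exp c)).clog_div
    (((hasDerivAt_id' z).const_add c).cexp.const_add 1) hB hslit).congr_deriv ?_
  simp only [two_mul, exp_add] at hB ⊢
  rw [div_sub_div _ _ hA hB]
  ring

theorem hasDerivAt_hairclip_schwarz_t (hB : 1 + exp (c + z) ≠ 0)
    (hslit : (exp c - exp z) / (1 + exp (c + z)) ∈ slitPlane) :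
    HasDerivAt (fun s ↦ log ((exp s - exp z) / (1 + exp (s + z))))
      (exp c * (1 + exp (2 * z)) / ((exp c - exp z) * (1 + exp (c + z)))) c := by
  have hA : exp c - exp z ≠ 0 := left_ne_zero_of_mul (slitPlane_ne_zero hslit)
  refine (((hasDerivAt_exp c).sub_const (exp z)).clog_div
    (((hasDerivAt_id' c).add_const z).cexp.const_add 1) hB hslit).congr_deriv ?_
  simp only [two_mul, exp_add] at hB ⊢
  rw [div_sub_div _ _ hA hB]
  ring

theorem hasDerivAt_hairclip_schwarz_deriv_z (hA : exp c - exp z ≠ 0) (hB : 1 + exp (c + z) ≠ 0) :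
    HasDerivAt (fun w ↦ -exp w * (1 + exp (2 * c)) / ((exp c - exp w) * (1 + exp (c + w))))
      (exp c * (1 + exp (2 * z)) / ((exp c - exp z) * (1 + exp (c + z))) *
        (-exp z * (1 + exp (2 * c)) / ((exp c - exp z) * (1 + exp (c + z))))) z := by
  refine (((hasDerivAt_exp z).neg.mul_const (1 + exp (2 * c))).div
    (((hasDerivAt_exp z).const_sub (exp c)).mul
      (((hasDerivAt_id' z).const_add c).cexp.const_add 1)) (mul_ne_zero hA hB)).congr_deriv ?_
  simp only [two_mul, exp_add, Pi.mul_apply, Pi.neg_apply]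
  rw [div_mul_div_comm, ← sq]
  ring

end Hairclip

/-- The hairclip Schwarz function `S(z,t) = Log((e^t − e^z)/(1 + e^{t+z}))`
satisfies the curve-shortening Schwarz function equation `S_t S_z = S_zz`. -/
theorem hairclip_schwarz (z : ℂ) (t : ℝ)
    (hA : Complex.exp (t : ℂ) - Complex.exp z ≠ 0)
    (hB : 1 + Complex.exp ((t : ℂ) + z) ≠ 0)
    (hslit : ∀ x : ℝ, x ≤ 0 →
      (Complex.exp (t : ℂ) - Complex.exp z) / (1 + Complex.exp ((t : ℂ) + z)) ≠ (x : ℂ)) :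
    HasDerivAt
      (fun w : ℂ =>
        Complex.log ((Complex.exp (t : ℂ) - Complex.exp w) / (1 + Complex.exp ((t : ℂ) + w))))
      (-Complex.exp z * (1 + Complex.exp (2 * (t : ℂ))) /
        ((Complex.exp (t : ℂ) - Complex.exp z) * (1 + Complex.exp ((t : ℂ) + z)))) z ∧
    HasDerivAt
      (fun s : ℝ =>
        Complex.log ((Complex.exp (s : ℂ) - Complex.exp z) / (1 + Complex.exp ((s : ℂ) + z))))
      (Complex.exp (t : ℂ) * (1 + Complex.exp (2 * z)) /
        ((Complex.exp (t : ℂ) - Complex.exp z) * (1 + Complex.exp ((t : ℂ) + z)))) t ∧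
    HasDerivAt
      (fun w : ℂ =>
        -Complex.exp w * (1 + Complex.exp (2 * (t : ℂ))) /
          ((Complex.exp (t : ℂ) - Complex.exp w) * (1 + Complex.exp ((t : ℂ) + w))))
      ((Complex.exp (t : ℂ) * (1 + Complex.exp (2 * z)) /
          ((Complex.exp (t : ℂ) - Complex.exp z) * (1 + Complex.exp ((t : ℂ) + z)))) *
        (-Complex.exp z * (1 + Complex.exp (2 * (t : ℂ))) /
          ((Complex.exp (t : ℂ) - Complex.exp z) * (1 + Complex.exp ((t : ℂ) + z))))) z := by
  have hq := mem_slitPlane_of_forall_nonpos_ne hslit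
  exact ⟨hasDerivAt_hairclip_schwarz_z hB hq, (hasDerivAt_hairclip_schwarz_t hB hq).comp_ofReal,
    hasDerivAt_hairclip_schwarz_deriv_z hA hB⟩
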